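/- Let h₃, h₄ : U → ℝ be C² nonvanishing functions on an open set U ⊆ ℝ³ with coordinates (x¹,x²,y³), and write a* = ∂a/∂y³. Define the vertical connection coefficients C³₃₃ = h₃*/(2h₃), C³₄₄ = −h₄*/(2h₃), C⁴₃₄ = C⁴₄₃ = h₄*/(2h₄), with all other C^a_{bc} = 0 (a,b,c ∈ {3,4}); set C₃ = C³₃₃ + C⁴₃₄ and C₄ = C³₄₃ + C⁴₄₄ (= 0), and define R_{bc} = ∂₃(C³_{bc}) − D_c(C_b) + Σ_{e} C^e_{bc} C_e − Σ_{e,d} C^e_{bd} C^d_{ec}, where D₃ = ∂₃ and D₄ = 0 (no quantity depends on y⁴). Then on U: R₃₃ = −h₄**/(2h₄) + (h₄*)²/(4h₄²) + h₃*h₄*/(4h₃h₄), R₄₄ = −h₄**/(2h₃) + h₃*h₄*/(4h₃²) + (h₄*)²/(4h₃h₄), and consequently R₃₃/h₃ = R₄₄/h₄ = −(1/(2h₃h₄)) [ h₄** − (h₄*)²/(2h₄) − h₃*h₄*/(2h₃) ]. -/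

import Mathlib

/-! Only `C³₃₃`, `C³₄₄` and `C⁴₃₄ = C⁴₄₃` are nonzero and `C₄ = 0`, so in `R₃₃` the term `∂₃C³₃₃`
cancels against part of `∂₃C₃`, and neither component involves a second derivative of `h₃`.
The quotient rule for `∂₃` then gives both components, and `R₃₃ / h₃ = R₄₄ / h₄` is an identity
of rational expressions in `h₃, h₄` and their derivatives. -/

noncomputable section

/-- Partial derivative `∂_i` on `ℝ³` (coordinates `(x¹,x²,y³)` indexed by `0,1,2`);
`pd 2 a = a*`. -/
def pd (i : Fin 3) (f : (Fin 3 → ℝ) → ℝ) : (Fin 3 → ℝ) → ℝ :=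
  fun x => fderiv ℝ f x (Pi.single i 1)

/-- The vertical coefficients `C^a_{bc}` (indices `3,4` encoded as `0,1`) of the canonical
d-connection of the vertical metric `g₃ = h₃`, `g₄ = h₄`:
`C³₃₃ = h₃*/(2h₃)`, `C³₄₄ = −h₄*/(2h₃)`, `C⁴₃₄ = C⁴₄₃ = h₄*/(2h₄)`, all others zero. -/
def Cv (h3 h4 : (Fin 3 → ℝ) → ℝ) : Fin 2 → Fin 2 → Fin 2 → (Fin 3 → ℝ) → ℝ :=
  ![![![fun x => pd 2 h3 x / (2 * h3 x), fun _ => 0],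
      ![fun _ => 0, fun x => -pd 2 h4 x / (2 * h3 x)]],
    ![![fun _ => 0, fun x => pd 2 h4 x / (2 * h4 x)],
      ![fun x => pd 2 h4 x / (2 * h4 x), fun _ => 0]]]

/-- `C_b = C³_{b3} + C⁴_{b4}`. -/
def Clow (h3 h4 : (Fin 3 → ℝ) → ℝ) (b : Fin 2) : (Fin 3 → ℝ) → ℝ :=
  fun x => Cv h3 h4 0 b 0 x + Cv h3 h4 1 b 1 x

/-- `R_{bc} = ∂₃(C³_{bc}) − D_c(C_b) + Σ_e C^e_{bc} C_e − Σ_{e,d} C^e_{bd} C^d_{ec}`,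
with `D₃ = ∂₃` and `D₄ = 0` (nothing depends on `y⁴`). -/
def RicV (h3 h4 : (Fin 3 → ℝ) → ℝ) (b c : Fin 2) (x : Fin 3 → ℝ) : ℝ :=
  pd 2 (Cv h3 h4 0 b c) x - (if c = 0 then pd 2 (Clow h3 h4 b) x else 0) +
    (∑ e : Fin 2, Cv h3 h4 e b c x * Clow h3 h4 e x) -
    ∑ e : Fin 2, ∑ d : Fin 2, Cv h3 h4 e b d x * Cv h3 h4 d e c x

section PartialDerivative

variable {i : Fin 3} {f g : (Fin 3 → ℝ) → ℝ} {x : Fin 3 → ℝ}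

theorem pd_add (hf : DifferentiableAt ℝ f x) (hg : DifferentiableAt ℝ g x) :
    pd i (fun y => f y + g y) x = pd i f x + pd i g x := by
  simp [pd, fderiv_fun_add hf hg]

theorem pd_neg : pd i (fun y => -f y) x = -pd i f x := by
  simp [pd, fderiv_fun_neg]

theorem pd_const_mul (c : ℝ) (hf : DifferentiableAt ℝ f x) :
    pd i (fun y => c * f y) x = c * pd i f x := by
  simp [pd, fderiv_const_mul hf]

theorem pd_mul (hf : DifferentiableAt ℝ f x) (hg : DifferentiableAt ℝ g x) :
    pd i (fun y => f y * g y) x = pd i f x * g x + f x * pd i g x := by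
  simp only [pd, fderiv_fun_mul hf hg, add_apply, smul_apply, smul_eq_mul]
  ring

theorem pd_inv (hg : DifferentiableAt ℝ g x) (hgx : g x ≠ 0) :
    pd i (fun y => (g y)⁻¹) x = -pd i g x / g x ^ 2 := by
  have h : HasFDerivAt (fun y => (g y)⁻¹) (-(g x ^ 2)⁻¹ • fderiv ℝ g x) x :=
    (hasDerivAt_inv hgx).comp_hasFDerivAt x hg.hasFDerivAt
  simp only [pd, h.fderiv, smul_apply, smul_eq_mul]
  ring

theorem pd_div (hf : DifferentiableAt ℝ f x) (hg : DifferentiableAt ℝ g x) (hgx : g x ≠ 0) :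
    pd i (fun y => f y / g y) x = (pd i f x * g x - f x * pd i g x) / g x ^ 2 := by
  simp only [div_eq_mul_inv]
  rw [pd_mul (g := fun y => (g y)⁻¹) hf (hg.inv hgx), pd_inv hg hgx]
  field_simp
  ring

theorem pd_div_two_mul (hf : DifferentiableAt ℝ f x) (hg : DifferentiableAt ℝ g x)
    (hgx : g x ≠ 0) :
    pd i (fun y => f y / (2 * g y)) x = (pd i f x * g x - f x * pd i g x) / (2 * g x ^ 2) := by
  rw [pd_div hf (hg.const_mul 2) (by positivity), pd_const_mul 2 hg]
  field_simp

theorem differentiableAt_pd (hf : ContDiffAt ℝ 2 f x) : DifferentiableAt ℝ (pd i f) x :=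
  ((hf.fderiv_right (by norm_num)).differentiableAt one_ne_zero).clm_apply
    (differentiableAt_const _)

end PartialDerivative

section VerticalRicci

variable {h3 h4 : (Fin 3 → ℝ) → ℝ} {x : Fin 3 → ℝ}

theorem RicV_zero_zero_eq_pd (hq3 : DifferentiableAt ℝ (fun y => pd 2 h3 y / (2 * h3 y)) x)
    (hq4 : DifferentiableAt ℝ (fun y => pd 2 h4 y / (2 * h4 y)) x) :
    RicV h3 h4 0 0 x = -pd 2 (fun y => pd 2 h4 y / (2 * h4 y)) x +
      pd 2 h3 x / (2 * h3 x) * (pd 2 h4 x / (2 * h4 x)) - (pd 2 h4 x / (2 * h4 x)) ^ 2 := by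
  have hClow : pd 2 (Clow h3 h4 0) x =
      pd 2 (fun y => pd 2 h3 y / (2 * h3 y)) x + pd 2 (fun y => pd 2 h4 y / (2 * h4 y)) x :=
    pd_add hq3 hq4
  rw [RicV, if_pos rfl, hClow]
  simp only [Fin.sum_univ_two, Clow, Cv, Matrix.cons_val_zero, Matrix.cons_val_one]
  ring

theorem RicV_one_one_eq_pd :
    RicV h3 h4 1 1 x = pd 2 (fun y => -pd 2 h4 y / (2 * h3 y)) x -
      pd 2 h4 x / (2 * h3 x) * (pd 2 h3 x / (2 * h3 x) - pd 2 h4 x / (2 * h4 x)) := by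
  rw [RicV, if_neg one_ne_zero]
  simp only [Fin.sum_univ_two, Clow, Cv, Matrix.cons_val_zero, Matrix.cons_val_one]
  ring

theorem RicV_zero_zero_eq (h3d : ContDiffAt ℝ 2 h3 x) (h4d : ContDiffAt ℝ 2 h4 x)
    (h3x : h3 x ≠ 0) (h4x : h4 x ≠ 0) :
    RicV h3 h4 0 0 x =
      -pd 2 (pd 2 h4) x / (2 * h4 x) + (pd 2 h4 x) ^ 2 / (4 * (h4 x) ^ 2) +
        pd 2 h3 x * pd 2 h4 x / (4 * h3 x * h4 x) := by
  have d3 : DifferentiableAt ℝ h3 x := h3d.differentiableAt (by norm_num)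
  have d4 : DifferentiableAt ℝ h4 x := h4d.differentiableAt (by norm_num)
  have two_h3 : 2 * h3 x ≠ 0 := by positivity
  have two_h4 : 2 * h4 x ≠ 0 := by positivity
  have p3 : DifferentiableAt ℝ (pd 2 h3) x := differentiableAt_pd h3d
  have p4 : DifferentiableAt ℝ (pd 2 h4) x := differentiableAt_pd h4d
  have q3 : DifferentiableAt ℝ (fun y => pd 2 h3 y / (2 * h3 y)) x := by
    fun_prop (disch := assumption)
  have q4 : DifferentiableAt ℝ (fun y => pd 2 h4 y / (2 * h4 y)) x := by
    fun_prop (disch := assumption)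
  rw [RicV_zero_zero_eq_pd q3 q4, pd_div_two_mul p4 d4 h4x]
  field_simp
  ring

theorem RicV_one_one_eq (h3d : DifferentiableAt ℝ h3 x) (h4d : ContDiffAt ℝ 2 h4 x)
    (h3x : h3 x ≠ 0) :
    RicV h3 h4 1 1 x =
      -pd 2 (pd 2 h4) x / (2 * h3 x) + pd 2 h3 x * pd 2 h4 x / (4 * (h3 x) ^ 2) +
        (pd 2 h4 x) ^ 2 / (4 * h3 x * h4 x) := by
  rw [RicV_one_one_eq_pd,
    pd_div_two_mul (f := fun y => -pd 2 h4 y) (differentiableAt_pd h4d).neg h3d h3x, pd_neg]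
  field_simp
  ring

end VerticalRicci

/-- Vertical Ricci computation for the vertical metric `[h₃, h₄]` with Killing symmetry. -/
theorem vertical_ricci_of_killing_v_metric
    (U : Set (Fin 3 → ℝ)) (hU : IsOpen U)
    (h3 h4 : (Fin 3 → ℝ) → ℝ)
    (hh3 : ContDiffOn ℝ 2 h3 U) (hh4 : ContDiffOn ℝ 2 h4 U)
    (hh3ne : ∀ x ∈ U, h3 x ≠ 0) (hh4ne : ∀ x ∈ U, h4 x ≠ 0) :
    ∀ x ∈ U,
      (RicV h3 h4 0 0 x =
        -pd 2 (pd 2 h4) x / (2 * h4 x) + (pd 2 h4 x) ^ 2 / (4 * (h4 x) ^ 2) +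
          pd 2 h3 x * pd 2 h4 x / (4 * h3 x * h4 x)) ∧
      (RicV h3 h4 1 1 x =
        -pd 2 (pd 2 h4) x / (2 * h3 x) + pd 2 h3 x * pd 2 h4 x / (4 * (h3 x) ^ 2) +
          (pd 2 h4 x) ^ 2 / (4 * h3 x * h4 x)) ∧
      (RicV h3 h4 0 0 x / h3 x = RicV h3 h4 1 1 x / h4 x) ∧
      (RicV h3 h4 1 1 x / h4 x =
        -(1 / (2 * h3 x * h4 x)) *
          (pd 2 (pd 2 h4) x - (pd 2 h4 x) ^ 2 / (2 * h4 x) -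
            pd 2 h3 x * pd 2 h4 x / (2 * h3 x))) := by
  intro x hx
  have h3d : ContDiffAt ℝ 2 h3 x := hh3.contDiffAt (hU.mem_nhds hx)
  have h4d : ContDiffAt ℝ 2 h4 x := hh4.contDiffAt (hU.mem_nhds hx)
  have h3x := hh3ne x hx
  have h4x := hh4ne x hx
  have R00 := RicV_zero_zero_eq h3d h4d h3x h4x
  have R11 := RicV_one_one_eq (h3d.differentiableAt (by norm_num)) h4d h3x
  refine ⟨R00, R11, ?_, ?_⟩
  · rw [R00, R11]
    field_simp
    ring
  · rw [R11]
    field_simp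
    ring
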